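/- Hyperboloid vs sphere (sphere of imaginary radius): in ℝ^{n+1} with the bilinear form B(x,y) = −x₀y₀ + x₁y₁ + ⋯ + xₙyₙ, the set H = { x : B(x,x) = −1, x₀ > 0 } with distance d(x,y) = arccosh(−B(x,y)) is a metric space; i.e., −B(x,y) ≥ 1 for all x, y ∈ H with equality iff x = y, and d satisfies the triangle inequality. -/

import Mathlib

/-!
For `y` on the upper sheet, the Lorentz form `B` is positive definite on the `B`-orthogonal
complement `y^⊥`; in coordinates this is the Euclidean Cauchy–Schwarz inequality for the spatial
parts. The rest is formal. The projection `u = x + B(x,y) y` of `x` to `y^⊥` has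
`B(u,u) = B(x,y)² - 1 ≥ 0`, with equality only if `x = y`, while `-B(x,y) > 0` on the upper
sheet.
For the triangle inequality, Cauchy–Schwarz on `y^⊥` for the projections of `x` and `z` gives
`-B(x,z) ≤ ab + √(a² - 1)√(b² - 1) = cosh (arcosh a + arcosh b)`, where `a = -B(x,y)` and
`b = -B(y,z)`.
-/

open Real

/-- The Lorentzian bilinear form `B(x,y) = −x₀y₀ + x₁y₁ + ⋯ + xₙyₙ` on `ℝ^{n+1}`. -/
def lorentz {n : ℕ} (x y : Fin (n + 1) → ℝ) : ℝ :=
  (∑ i, x i * y i) - 2 * x 0 * y 0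

/-- The upper sheet of the hyperboloid `B(x,x) = −1`, `x₀ > 0`. -/
def Hyperboloid (n : ℕ) : Set (Fin (n + 1) → ℝ) :=
  {x | lorentz x x = -1 ∧ 0 < x 0}

/-- The inverse hyperbolic cosine on `[1, ∞)`. -/
noncomputable def arcosh (x : ℝ) : ℝ := Real.log (x + Real.sqrt (x ^ 2 - 1))

namespace LinearMap.BilinForm

variable {M : Type*} [AddCommGroup M] [Module ℝ M] {B : LinearMap.BilinForm ℝ M} {x y z : M}

lemma apply_add_apply_smul_eq_zero (hy : B y y = -1) : B (x + B x y • y) y = 0 := by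
  simp [hy]

lemma apply_add_apply_smul_add_apply_smul (hy : B y y = -1) :
    B (x + B x y • y) (z + B z y • y) = B x z + B x y * B y z := by
  simp only [map_add, map_smul, LinearMap.add_apply, smul_apply, smul_eq_mul, hy, mul_neg]
  ring

lemma apply_self_nonneg_of_orthogonal (hpos : ∀ w, B w y = 0 → w ≠ 0 → 0 < B w w) {w : M}
    (hw : B w y = 0) : 0 ≤ B w w := by
  rcases eq_or_ne w 0 with rfl | hw₀
  · simp
  · exact (hpos w hw hw₀).le

lemma apply_sq_le_of_orthogonal (hB : B.IsSymm) (hpos : ∀ w, B w y = 0 → w ≠ 0 → 0 < B w w)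
    {u v : M} (hu : B u y = 0) (hv : B v y = 0) : B u v ^ 2 ≤ B u u * B v v :=
  let W := LinearMap.ker (B.flip y)
  (B.restrict W).apply_sq_le_of_symm
    (fun w => apply_self_nonneg_of_orthogonal hpos w.2) (isSymm_iff.mp (hB.restrict W))
    ⟨u, hu⟩ ⟨v, hv⟩

lemma one_le_apply_sq (hB : B.IsSymm) (hpos : ∀ w, B w y = 0 → w ≠ 0 → 0 < B w w)
    (hx : B x x = -1) (hy : B y y = -1) : 1 ≤ B x y ^ 2 := by
  have h := apply_self_nonneg_of_orthogonal hpos (apply_add_apply_smul_eq_zero (x := x) hy)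
  rw [apply_add_apply_smul_add_apply_smul hy, hx, ← hB.eq x y] at h
  linarith

lemma eq_of_apply_eq_neg_one (hB : B.IsSymm) (hpos : ∀ w, B w y = 0 → w ≠ 0 → 0 < B w w)
    (hx : B x x = -1) (hy : B y y = -1) (hxy : B x y = -1) : x = y := by
  have hu := apply_add_apply_smul_eq_zero (x := x) hy
  have huu := apply_add_apply_smul_add_apply_smul (x := x) (z := x) hy
  rw [hx, ← hB.eq x y] at huu
  rw [hxy, neg_one_smul, ← sub_eq_add_neg] at hu huu
  by_contra hne
  have := huu ▸ hpos _ hu (sub_ne_zero.mpr hne)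
  norm_num at this

lemma neg_apply_le (hB : B.IsSymm) (hpos : ∀ w, B w y = 0 → w ≠ 0 → 0 < B w w)
    (hx : B x x = -1) (hy : B y y = -1) (hz : B z z = -1) :
    -B x z ≤ (-B x y) * (-B y z) + √((-B x y) ^ 2 - 1) * √((-B y z) ^ 2 - 1) := by
  have hcs := apply_sq_le_of_orthogonal hB hpos (apply_add_apply_smul_eq_zero (x := x) hy)
    (apply_add_apply_smul_eq_zero (x := z) hy)
  rw [apply_add_apply_smul_add_apply_smul hy, apply_add_apply_smul_add_apply_smul hy,
    apply_add_apply_smul_add_apply_smul hy, hx, hz, ← hB.eq x y, hB.eq z y] at hcs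
  have hyz : 0 ≤ B y z ^ 2 - 1 := by linarith [hB.eq z y ▸ one_le_apply_sq hB hpos hz hy]
  rw [neg_sq, neg_sq, ← Real.sqrt_mul' _ hyz]
  have := Real.abs_le_sqrt (hcs.trans_eq (by ring) : _ ≤ (B x y ^ 2 - 1) * (B y z ^ 2 - 1))
  linarith [neg_abs_le (B x z + B x y * B y z)]

end LinearMap.BilinForm

lemma arcosh_eq_real_arcosh (x : ℝ) : _root_.arcosh x = Real.arcosh x := rfl

lemma Real.arcosh_le_arcosh_add_arcosh {a b c : ℝ} (ha : 1 ≤ a) (hb : 1 ≤ b) (hc : 0 < c)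
    (h : c ≤ a * b + √(a ^ 2 - 1) * √(b ^ 2 - 1)) :
    Real.arcosh c ≤ Real.arcosh a + Real.arcosh b := by
  have hcosh : a * b + √(a ^ 2 - 1) * √(b ^ 2 - 1) = cosh (Real.arcosh a + Real.arcosh b) := by
    rw [cosh_add, cosh_arcosh ha, cosh_arcosh hb, sinh_arcosh ha, sinh_arcosh hb]
  calc Real.arcosh c ≤ Real.arcosh (cosh (Real.arcosh a + Real.arcosh b)) :=
        (Real.arcosh_le_arcosh hc (cosh_pos _)).mpr (hcosh ▸ h)
    _ = Real.arcosh a + Real.arcosh b :=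
        arcosh_cosh (add_nonneg (arcosh_nonneg ha) (arcosh_nonneg hb))

lemma dotProduct_self_nonneg {ι : Type*} [Fintype ι] (v : ι → ℝ) : 0 ≤ v ⬝ᵥ v :=
  Finset.sum_nonneg fun i _ => mul_self_nonneg (v i)

lemma sq_dotProduct_le {ι : Type*} [Fintype ι] (v w : ι → ℝ) :
    (v ⬝ᵥ w) ^ 2 ≤ (v ⬝ᵥ v) * (w ⬝ᵥ w) := by
  simpa only [dotProduct, sq] using Finset.sum_mul_sq_le_sq_mul_sq Finset.univ v w

section Lorentz

variable {n : ℕ} {w x y z : Fin (n + 1) → ℝ}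

lemma lorentz_eq_dotProduct_tail (x y : Fin (n + 1) → ℝ) :
    lorentz x y = Fin.tail x ⬝ᵥ Fin.tail y - x 0 * y 0 := by
  simp only [lorentz, dotProduct, Fin.sum_univ_succ, Fin.tail]
  ring

variable (n) in
def lorentzForm : LinearMap.BilinForm ℝ (Fin (n + 1) → ℝ) :=
  LinearMap.mk₂ ℝ lorentz
    (fun _ _ _ => by simp only [lorentz, Pi.add_apply, add_mul, Finset.sum_add_distrib]; ring)
    (fun _ _ _ => by
      simp only [lorentz, Pi.smul_apply, smul_eq_mul, mul_assoc, ← Finset.mul_sum]; ring)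
    (fun _ _ _ => by simp only [lorentz, Pi.add_apply, mul_add, Finset.sum_add_distrib]; ring)
    (fun _ _ _ => by
      simp only [lorentz, Pi.smul_apply, smul_eq_mul, mul_left_comm _ (_ : ℝ), ← Finset.mul_sum]
      ring)

lemma lorentzForm_isSymm : (lorentzForm n).IsSymm :=
  ⟨fun x y => by simp only [lorentzForm, LinearMap.mk₂_apply, lorentz, mul_comm (x _)]; ring⟩

lemma lorentz_pos_of_orthogonal (hy : y ∈ Hyperboloid n) (hwy : lorentz w y = 0) (hw : w ≠ 0) :
    0 < lorentz w w := by
  obtain ⟨hyy, hy0⟩ := hy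
  rw [lorentz_eq_dotProduct_tail] at hyy hwy ⊢
  have hcs := sq_dotProduct_le (Fin.tail w) (Fin.tail y)
  have hspace : 0 < Fin.tail w ⬝ᵥ Fin.tail w := by
    refine (dotProduct_self_nonneg _).lt_of_ne fun h => hw ?_
    have htail : Fin.tail w = 0 := dotProduct_self_eq_zero.mp h.symm
    have h0 : w 0 = 0 := by
      rw [htail, zero_dotProduct, zero_sub, neg_eq_zero] at hwy
      exact (mul_eq_zero.mp hwy).resolve_right hy0.ne'
    rw [← Fin.cons_self_tail w, h0, htail]
    exact Matrix.cons_zero_zero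
  have hc : Fin.tail w ⬝ᵥ Fin.tail y = w 0 * y 0 := by linarith
  have hp : Fin.tail y ⬝ᵥ Fin.tail y = y 0 ^ 2 - 1 := by linarith
  rw [hc, hp] at hcs
  nlinarith [mul_pos hy0 hy0]

lemma neg_lorentz_pos (hx : x ∈ Hyperboloid n) (hy : y ∈ Hyperboloid n) : 0 < -lorentz x y := by
  obtain ⟨hxx, hx0⟩ := hx
  obtain ⟨hyy, hy0⟩ := hy
  rw [lorentz_eq_dotProduct_tail] at hxx hyy ⊢
  have hcs := sq_dotProduct_le (Fin.tail x) (Fin.tail y)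
  have hp : Fin.tail x ⬝ᵥ Fin.tail x = x 0 ^ 2 - 1 := by linarith
  have hq : Fin.tail y ⬝ᵥ Fin.tail y = y 0 ^ 2 - 1 := by linarith
  have hp₀ := dotProduct_self_nonneg (Fin.tail x)
  rw [hp, hq] at hcs
  nlinarith [mul_pos hx0 hy0, mul_pos hy0 hy0]

lemma one_le_neg_lorentz (hx : x ∈ Hyperboloid n) (hy : y ∈ Hyperboloid n) :
    1 ≤ -lorentz x y := by
  have h : 1 ≤ lorentz x y ^ 2 := (lorentzForm n).one_le_apply_sq lorentzForm_isSymm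
    (fun _ => lorentz_pos_of_orthogonal hy) hx.1 hy.1
  nlinarith [neg_lorentz_pos hx hy]

lemma neg_lorentz_eq_one_iff (hx : x ∈ Hyperboloid n) (hy : y ∈ Hyperboloid n) :
    -lorentz x y = 1 ↔ x = y := by
  refine ⟨fun h => (lorentzForm n).eq_of_apply_eq_neg_one lorentzForm_isSymm
    (fun _ => lorentz_pos_of_orthogonal hy) hx.1 hy.1 (neg_eq_iff_eq_neg.mp h), ?_⟩
  rintro rfl
  linarith [hx.1]

lemma neg_lorentz_le (hx : x ∈ Hyperboloid n) (hy : y ∈ Hyperboloid n)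
    (hz : z ∈ Hyperboloid n) : -lorentz x z ≤
      (-lorentz x y) * (-lorentz y z) + √((-lorentz x y) ^ 2 - 1) * √((-lorentz y z) ^ 2 - 1) :=
  (lorentzForm n).neg_apply_le lorentzForm_isSymm (fun _ => lorentz_pos_of_orthogonal hy)
    hx.1 hy.1 hz.1

end Lorentz

/-- The hyperboloid as a sphere of imaginary radius: on the upper sheet `H` of the hyperboloid,
`−B(x,y) ≥ 1`, with equality iff `x = y`, and `d(x,y) = arccosh(−B(x,y))` satisfies the
triangle inequality, so `(H, d)` is a metric space. -/
theorem hyperboloid_metric (n : ℕ) :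
    (∀ x ∈ Hyperboloid n, ∀ y ∈ Hyperboloid n, 1 ≤ -lorentz x y) ∧
    (∀ x ∈ Hyperboloid n, ∀ y ∈ Hyperboloid n, (-lorentz x y = 1 ↔ x = y)) ∧
    (∀ x ∈ Hyperboloid n, ∀ y ∈ Hyperboloid n, ∀ z ∈ Hyperboloid n,
      _root_.arcosh (-lorentz x z) ≤ _root_.arcosh (-lorentz x y) + _root_.arcosh (-lorentz y z)) := by
  refine ⟨fun _ hx _ hy => one_le_neg_lorentz hx hy,
    fun _ hx _ hy => neg_lorentz_eq_one_iff hx hy, fun _ hx _ hy _ hz => ?_⟩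
  simp only [arcosh_eq_real_arcosh]
  exact Real.arcosh_le_arcosh_add_arcosh (one_le_neg_lorentz hx hy) (one_le_neg_lorentz hy hz)
    (neg_lorentz_pos hx hz) (neg_lorentz_le hx hy hz)
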